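/- arXiv:1309.3673 — 2 statements merged into one kernel-verified Lean document; each statement's English description precedes it below -/
import Mathlib

section
/- For each positive integer n, f(n+1) ≥ 2·f(n), where f(n) is the greatest finite number of integer solutions of a subsystem of E_n. In particular, f(n+1) > f(n), so f is strictly increasing. -/
/-- An equation of `E_n`: `x i = 1`, `x i + x j = x k`, or `x i * x j = x k`. -/
inductive Eqn (n : ℕ) where
  | one : Fin n → Eqn n
  | add : Fin n → Fin n → Fin n → Eqn n
  | mul : Fin n → Fin n → Fin n → Eqn n

/-- A tuple satisfies an equation. -/
def Eqn.holds {n : ℕ} (x : Fin n → ℤ) : Eqn n → Prop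
  | .one i => x i = 1
  | .add i j k => x i + x j = x k
  | .mul i j k => x i * x j = x k

/-- Integer solution set of a subsystem `S ⊆ E_n`. -/
def solSet {n : ℕ} (S : Set (Eqn n)) : Set (Fin n → ℤ) :=
  {x | ∀ e ∈ S, e.holds x}

/-- `f n`: the greatest finite number of integer solutions of a subsystem of `E_n`. -/
noncomputable def f (n : ℕ) : ℕ :=
  sSup {r | ∃ S : Set (Eqn n), (solSet S).Finite ∧ (solSet S).ncard = r}

namespace FAux

instance instFiniteEqn (n : ℕ) : Finite (Eqn n) := by
  apply Finite.of_surjective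
    (fun p : Fin n ⊕ (Fin n × Fin n × Fin n) ⊕ (Fin n × Fin n × Fin n) =>
      match p with
      | .inl i => Eqn.one i
      | .inr (.inl (i, j, k)) => Eqn.add i j k
      | .inr (.inr (i, j, k)) => Eqn.mul i j k)
  intro e
  cases e with
  | one i => exact ⟨.inl i, rfl⟩
  | add i j k => exact ⟨.inr (.inl (i, j, k)), rfl⟩
  | mul i j k => exact ⟨.inr (.inr (i, j, k)), rfl⟩

/-- The set whose supremum is `f n`. -/
def A (n : ℕ) : Set ℕ :=
  {r | ∃ S : Set (Eqn n), (solSet S).Finite ∧ (solSet S).ncard = r}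

lemma A_finite (n : ℕ) : (A n).Finite := by
  have h : A n ⊆ Set.range (fun S : Set (Eqn n) => (solSet S).ncard) := by
    rintro r ⟨S, _, hS⟩; exact ⟨S, hS⟩
  exact (Set.finite_range _).subset h

lemma one_mem_A (n : ℕ) (hn : 0 < n) : 1 ∈ A n := by
  have hs : solSet (Set.range (Eqn.one (n := n))) = {fun _ => 1} := by
    ext x
    simp only [solSet, Set.mem_setOf_eq, Set.mem_singleton_iff]
    constructor
    · intro h; funext i; exact h (.one i) ⟨i, rfl⟩
    · rintro rfl e ⟨i, rfl⟩; rfl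
  exact ⟨Set.range Eqn.one, by rw [hs]; exact Set.finite_singleton _,
    by rw [hs]; exact Set.ncard_singleton _⟩

/-- Lift an equation of `E_n` to `E_{n+1}`. -/
def liftEqn {n : ℕ} : Eqn n → Eqn (n + 1)
  | .one i => .one i.castSucc
  | .add i j k => .add i.castSucc j.castSucc k.castSucc
  | .mul i j k => .mul i.castSucc j.castSucc k.castSucc

lemma liftEqn_holds {n : ℕ} (x : Fin (n + 1) → ℤ) (e : Eqn n) :
    (liftEqn e).holds x ↔ e.holds (Fin.init x) := by
  cases e <;> simp [liftEqn, Eqn.holds, Fin.init]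

lemma ncard_prod {α β : Type*} (s : Set α) (t : Set β) :
    (s ×ˢ t).ncard = s.ncard * t.ncard := by
  rw [← Nat.card_coe_set_eq, ← Nat.card_coe_set_eq, ← Nat.card_coe_set_eq,
    Nat.card_congr (Equiv.Set.prod s t), Nat.card_prod]

lemma double_mem_A (n : ℕ) {r : ℕ} (hr : r ∈ A n) : 2 * r ∈ A (n + 1) := by
  obtain ⟨S, hfin, hcard⟩ := hr
  set S' : Set (Eqn (n + 1)) :=
    liftEqn '' S ∪ {Eqn.mul (Fin.last n) (Fin.last n) (Fin.last n)} with hS'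
  have hset : solSet S' =
      (fun p : (Fin n → ℤ) × ℤ => Fin.snoc p.1 p.2) '' (solSet S ×ˢ ({0, 1} : Set ℤ)) := by
    ext x
    constructor
    · intro hx
      refine ⟨(Fin.init x, x (Fin.last n)), ⟨?_, ?_⟩, Fin.snoc_init_self x⟩
      · intro e he
        have := hx (liftEqn e) (Or.inl ⟨e, he, rfl⟩)
        exact (liftEqn_holds x e).mp this
      · have h := hx (Eqn.mul (Fin.last n) (Fin.last n) (Fin.last n)) (Or.inr rfl)
        simp only [Eqn.holds] at h
        have h0 : x (Fin.last n) * (x (Fin.last n) - 1) = 0 := by linear_combination h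
        have h1 := mul_eq_zero.mp h0
        simp only [Set.mem_insert_iff, Set.mem_singleton_iff]
        omega
    · rintro ⟨⟨y, a⟩, ⟨hy, ha⟩, rfl⟩
      intro e he
      rcases he with ⟨e', he', rfl⟩ | he
      · rw [liftEqn_holds]
        simpa [Fin.init_snoc] using hy e' he'
      · simp only [Set.mem_singleton_iff] at he
        subst he
        simp only [Eqn.holds, Fin.snoc_last]
        rcases ha with rfl | rfl <;> ring
  have hinj : Set.InjOn (fun p : (Fin n → ℤ) × ℤ => (Fin.snoc p.1 p.2 : Fin (n + 1) → ℤ))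
      (solSet S ×ˢ ({0, 1} : Set ℤ)) := by
    rintro ⟨y, a⟩ _ ⟨z, b⟩ _ h
    simp only at h
    have h1 : y = z := by
      have := congrArg Fin.init h
      simpa [Fin.init_snoc] using this
    have h2 : a = b := by
      have := congrArg (fun g => g (Fin.last n)) h
      simpa [Fin.snoc_last] using this
    simp [h1, h2]
  have hprodfin : (solSet S ×ˢ ({0, 1} : Set ℤ)).Finite :=
    hfin.prod (Set.toFinite _)
  refine ⟨S', by rw [hset]; exact hprodfin.image _, ?_⟩
  rw [hset, Set.ncard_image_of_injOn hinj, ncard_prod, hcard,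
    Set.ncard_pair (by norm_num : (0 : ℤ) ≠ 1)]
  ring

end FAux

theorem f_strictly_increasing (n : ℕ) (hn : 0 < n) :
    2 * f n ≤ f (n + 1) ∧ f n < f (n + 1) := by
  have hfn : f n ∈ FAux.A n :=
    Nat.sSup_mem ⟨1, FAux.one_mem_A n hn⟩ (FAux.A_finite n).bddAbove
  have h2 : 2 * f n ∈ FAux.A (n + 1) := FAux.double_mem_A n hfn
  have hle : 2 * f n ≤ f (n + 1) := le_csSup (FAux.A_finite (n + 1)).bddAbove h2
  have h1 : 1 ≤ f n := le_csSup (FAux.A_finite n).bddAbove (FAux.one_mem_A n hn)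
  exact ⟨hle, by omega⟩
end

section
/- Suppose g : ℕ⁺ → ℕ⁺ is a non-decreasing function with f(n) ≤ g(n) for all positive integers n, where f(n) is the greatest finite number of integer solutions of a subsystem of E_n. Then there is no polynomial W(x_1, x_2, x_3, …, x_m) with integer coefficients such that (i) for all non-negative integers x_1, x_2: g(x_1) = x_2 if and only if there exist x_3, …, x_m ∈ ℕ with W(x_1, x_2, x_3, …, x_m) = 0, and (ii) for all non-negative integers x_1, x_2, only finitely many tuples (x_3, …, x_m) ∈ ℕ^{m−2} satisfy W(x_1, x_2, x_3, …, x_m) = 0. -/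
/-!
Suppose `W` represented `g` finite-fold. Write `x₂ = y + z` and encode `y`, `z` and the
unknowns `v` as sums of four integer squares. For `K = 2 ^ 2 ^ k`, the integer solutions of
`W(K, x₂, v) = 0` in these variables form a finite set with at least `g K + 1` elements
(one for each splitting of `x₂ = g K`). Since `K` is reached from `1` by one addition and `k`
squarings, Lemma 1 turns this equation into a subsystem of `E_N` with `N = k + O(1) ≤ K`
variables, so `g K + 1 ≤ f N ≤ g N ≤ g K`.
-/

namespace Eqn

variable {n n' : ℕ}

def map (σ : Fin n → Fin n') : Eqn n → Eqn n'
  | .one i => .one (σ i)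
  | .add i j k => .add (σ i) (σ j) (σ k)
  | .mul i j k => .mul (σ i) (σ j) (σ k)

theorem holds_map (σ : Fin n → Fin n') (y : Fin n' → ℤ) (e : Eqn n) :
    (e.map σ).holds y ↔ e.holds (y ∘ σ) := by
  cases e <;> rfl

private def encode : Eqn n → Fin n ⊕ (Fin n × Fin n × Fin n) ⊕ (Fin n × Fin n × Fin n)
  | .one i => .inl i
  | .add i j k => .inr (.inl (i, j, k))
  | .mul i j k => .inr (.inr (i, j, k))

instance : Finite (Eqn n) :=
  Finite.of_injective encode <| by
    rintro (_ | _ | _) (_ | _ | _) h <;> simp_all [encode]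

end Eqn

theorem ncard_solSet_le_f {n : ℕ} {S : Set (Eqn n)} (h : (solSet S).Finite) :
    (solSet S).ncard ≤ f n :=
  le_csSup ((Set.finite_range fun S : Set (Eqn n) => (solSet S).ncard).subset
    (by rintro _ ⟨S, -, rfl⟩; exact ⟨S, rfl⟩)).bddAbove ⟨S, h, rfl⟩

structure Presentation (X : Type*) (n : ℕ) where
  sys : Set (Eqn n)
  ext : X → Fin n → ℤ
  ext_injective : Function.Injective ext
  solSet_sys : solSet sys = Set.range ext

namespace Presentation

variable {X : Type*} {n : ℕ}

def Computes (P : Presentation X n) (F : X → ℤ) : Prop :=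
  ∃ k, ∀ x, P.ext x k = F x

def snoc (P : Presentation X n) (e : Eqn (n + 1)) (φ : (Fin n → ℤ) → ℤ)
    (he : ∀ y, e.holds y ↔ y (Fin.last n) = φ (Fin.init y)) : Presentation X (n + 1) where
  sys := Eqn.map Fin.castSucc '' P.sys ∪ {e}
  ext x := Fin.snoc (P.ext x) (φ (P.ext x))
  ext_injective x x' h := P.ext_injective <| by
    simpa only [Fin.init_snoc] using congrArg Fin.init h
  solSet_sys := by
    ext y
    have hinit : Fin.init y ∈ solSet P.sys ↔ ∀ e' ∈ P.sys, (e'.map Fin.castSucc).holds y :=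
      forall₂_congr fun e' _ => (Eqn.holds_map _ _ _).symm
    simp only [solSet, Set.mem_ofPred_eq, Set.mem_union, Set.mem_image, Set.mem_singleton_iff,
      or_imp, forall_and, forall_exists_index, and_imp, forall_apply_eq_imp_iff₂, forall_eq]
    rw [← hinit, P.solSet_sys, he]
    constructor
    · rintro ⟨⟨x, hx⟩, hlast⟩
      refine ⟨x, ?_⟩
      change Fin.snoc (P.ext x) (φ (P.ext x)) = y
      rw [hx, ← hlast, Fin.snoc_init_self]
    · rintro ⟨x, rfl⟩
      simp

theorem Computes.snoc {P : Presentation X n} {F : X → ℤ} (hF : P.Computes F) (e : Eqn (n + 1))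
    (φ : (Fin n → ℤ) → ℤ) (he : ∀ y, e.holds y ↔ y (Fin.last n) = φ (Fin.init y)) :
    (P.snoc e φ he).Computes F := by
  obtain ⟨k, hk⟩ := hF
  exact ⟨k.castSucc, fun x => by simp [Presentation.snoc, hk]⟩

theorem computes_snoc (P : Presentation X n) (e : Eqn (n + 1)) (φ : (Fin n → ℤ) → ℤ)
    (he : ∀ y, e.holds y ↔ y (Fin.last n) = φ (Fin.init y)) :
    (P.snoc e φ he).Computes fun x => φ (P.ext x) :=
  ⟨Fin.last n, fun x => by simp [Presentation.snoc]⟩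

end Presentation

def Presentable (X : Type*) (n : ℕ) (C : Set (X → ℤ)) : Prop :=
  ∃ P : Presentation X n, ∀ F ∈ C, P.Computes F

namespace Presentable

variable {X : Type*} {n : ℕ} {C C' : Set (X → ℤ)} {F G H : X → ℤ}

theorem of_subset (h : Presentable X n C) (hC : C' ⊆ C) : Presentable X n C' :=
  let ⟨P, hP⟩ := h; ⟨P, fun F hF => hP F (hC hF)⟩

theorem coordinates {ι : Type*} [Fintype ι] :
    Presentable (ι → ℤ) (Fintype.card ι) (Set.range fun i x => x i) :=
  let e := Fintype.equivFin ι
  ⟨{ sys := ∅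
     ext := fun x => x ∘ e.symm
     ext_injective := (e.arrowCongr (Equiv.refl ℤ)).injective
     solSet_sys := Set.ext fun y =>
       ⟨fun _ => ⟨y ∘ e, by ext; simp⟩, fun _ _ he => absurd he (Set.notMem_empty _)⟩ },
    by rintro _ ⟨i, rfl⟩; exact ⟨e i, fun x => by simp⟩⟩

theorem insert_of_eqn (h : Presentable X n C)
    (hF : ∀ P : Presentation X n, (∀ G ∈ C, P.Computes G) → ∃ (e : Eqn (n + 1))
      (φ : (Fin n → ℤ) → ℤ), (∀ y, e.holds y ↔ y (Fin.last n) = φ (Fin.init y)) ∧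
        ∀ x, φ (P.ext x) = F x) :
    Presentable X (n + 1) (insert F C) := by
  obtain ⟨P, hP⟩ := h
  obtain ⟨e, φ, he, hφ⟩ := hF P hP
  refine ⟨P.snoc e φ he, Set.forall_mem_insert.2 ⟨?_, fun G hG => (hP G hG).snoc e φ he⟩⟩
  simpa only [hφ] using P.computes_snoc e φ he

theorem insert_one (h : Presentable X n C) : Presentable X (n + 1) (insert (fun _ => 1) C) :=
  h.insert_of_eqn fun _ _ => ⟨.one (Fin.last n), fun _ => 1, fun _ => Iff.rfl, fun _ => rfl⟩

theorem insert_add (h : Presentable X n C) (hF : F ∈ C) (hG : G ∈ C) :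
    Presentable X (n + 1) (insert (fun x => F x + G x) C) :=
  h.insert_of_eqn fun _ hP =>
    let ⟨i, hi⟩ := hP F hF; let ⟨j, hj⟩ := hP G hG
    ⟨.add i.castSucc j.castSucc (Fin.last n), fun y => y i + y j, fun _ => eq_comm,
      fun x => by simp only [hi, hj]⟩

theorem insert_mul (h : Presentable X n C) (hF : F ∈ C) (hG : G ∈ C) :
    Presentable X (n + 1) (insert (fun x => F x * G x) C) :=
  h.insert_of_eqn fun _ hP =>
    let ⟨i, hi⟩ := hP F hF; let ⟨j, hj⟩ := hP G hG
    ⟨.mul i.castSucc j.castSucc (Fin.last n), fun y => y i * y j, fun _ => eq_comm,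
      fun x => by simp only [hi, hj]⟩

theorem insert_sub (h : Presentable X n C) (hF : F ∈ C) (hG : G ∈ C) :
    Presentable X (n + 1) (insert (fun x => F x - G x) C) :=
  h.insert_of_eqn fun _ hP =>
    let ⟨i, hi⟩ := hP F hF; let ⟨j, hj⟩ := hP G hG
    ⟨.add (Fin.last n) j.castSucc i.castSucc, fun y => y i - y j,
      fun _ => eq_sub_iff_add_eq.symm, fun x => by simp only [hi, hj]⟩

theorem of_le (h : Presentable X n C) {n' : ℕ} (hn : n ≤ n') : Presentable X n' C := by
  induction n', hn using Nat.le_induction with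
  | base => exact h
  | succ n' _ ih => exact ih.insert_one.of_subset (Set.subset_insert _ _)

theorem insert_congr {n' : ℕ}
    (h : Presentable X n (insert F C')) (hFG : F = G) (hC : C ⊆ C') (hn : n ≤ n') :
    Presentable X n' (insert G C) :=
  hFG ▸ (h.of_le hn).of_subset (Set.insert_subset_insert hC)

theorem exists_solSet_eq_image (h : Presentable X n C) (hH : H ∈ C) :
    ∃ (S : Set (Eqn n)) (ext : X → Fin n → ℤ), Function.Injective ext ∧
      solSet S = ext '' {x | H x = 0} := by
  obtain ⟨P, hP⟩ := h
  obtain ⟨k, hk⟩ := hP H hH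
  refine ⟨P.sys ∪ {.add k k k}, P.ext, P.ext_injective, ?_⟩
  have : solSet (P.sys ∪ {.add k k k}) = solSet P.sys ∩ {y | y k + y k = y k} := by
    ext y; simp [solSet, or_imp, forall_and, Eqn.holds, and_comm]
  rw [this, P.solSet_sys]
  ext y
  constructor
  · rintro ⟨⟨x, rfl⟩, hx⟩
    exact ⟨x, by simpa [hk] using hx, rfl⟩
  · rintro ⟨x, hx, rfl⟩
    exact ⟨⟨x, rfl⟩, by simpa [hk] using hx⟩

-- Lemma 1 of the paper, keeping track of the number of variables.
theorem ncard_le_f (h : Presentable X n C) (hH : H ∈ C) (hfin : {x | H x = 0}.Finite) :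
    {x | H x = 0}.ncard ≤ f n := by
  obtain ⟨S, ext, hext, hS⟩ := h.exists_solSet_eq_image hH
  have hSfin : (solSet S).Finite := hS ▸ hfin.image ext
  simpa [hS, Set.ncard_image_of_injective _ hext] using ncard_solSet_le_f hSfin

theorem insert_two_pow_two_pow (h : Presentable X n C) (k : ℕ) :
    Presentable X (n + (k + 2)) (insert (fun _ => 2 ^ 2 ^ k) C) := by
  induction k with
  | zero =>
    exact (h.insert_one.insert_add (.inl rfl) (.inl rfl)).insert_congr (by norm_num)
      (Set.subset_insert _ _) le_rfl
  | succ k ih =>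
    exact (ih.insert_mul (.inl rfl) (.inl rfl)).insert_congr (by simp [pow_succ, pow_mul])
      (Set.subset_insert _ _) (by omega)

theorem exists_insert_intCast (a : ℤ) :
    ∃ c, ∀ {n : ℕ} {C : Set (X → ℤ)}, Presentable X n C →
      Presentable X (n + c) (insert (fun _ => a) C) := by
  induction a using Int.induction_on with
  | zero =>
    exact ⟨2, fun h => (h.insert_one.insert_sub (.inl rfl) (.inl rfl)).insert_congr (by simp)
      (Set.subset_insert _ _) le_rfl⟩
  | succ a ih =>
    obtain ⟨c, hc⟩ := ih
    refine ⟨c + 2, fun h => ?_⟩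
    exact ((hc h).insert_one.insert_add (.inr (.inl rfl)) (.inl rfl)).insert_congr rfl
      ((Set.subset_insert _ _).trans (Set.subset_insert _ _)) (by omega)
  | pred a ih =>
    obtain ⟨c, hc⟩ := ih
    refine ⟨c + 2, fun h => ?_⟩
    exact ((hc h).insert_one.insert_sub (.inr (.inl rfl)) (.inl rfl)).insert_congr rfl
      ((Set.subset_insert _ _).trans (Set.subset_insert _ _)) (by omega)

open MvPolynomial in
theorem exists_insert_eval {σ : Type*} (Q : MvPolynomial σ ℤ) :
    ∃ c, ∀ {n : ℕ} {C : Set (X → ℤ)} (F : σ → X → ℤ), Presentable X n C →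
      (∀ s, F s ∈ C) →
        Presentable X (n + c) (insert (fun x => eval (fun s => F s x) Q) C) := by
  induction Q using MvPolynomial.induction_on with
  | C a =>
    obtain ⟨c, hc⟩ := exists_insert_intCast (X := X) a
    exact ⟨c, fun F h _ => by simpa using hc h⟩
  | add P Q hP hQ =>
    obtain ⟨cP, hP⟩ := hP
    obtain ⟨cQ, hQ⟩ := hQ
    refine ⟨cP + cQ + 1, fun F h hF => ?_⟩
    have hPQ := hQ F (hP F h hF) fun s => .inr (hF s)
    exact (hPQ.insert_add (.inr (.inl rfl)) (.inl rfl)).insert_congr (by simp)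
      ((Set.subset_insert _ _).trans (Set.subset_insert _ _)) (by omega)
  | mul_X P i hP =>
    obtain ⟨c, hP⟩ := hP
    refine ⟨c + 1, fun F h hF => ?_⟩
    exact ((hP F h hF).insert_mul (.inl rfl) (.inr (hF i))).insert_congr (by simp)
      (Set.subset_insert _ _) (by omega)

end Presentable

section SumSq

variable {κ : Type*} [Fintype κ]

def sumSq (q : κ → ℤ) : ℕ :=
  ∑ t, (q t).natAbs ^ 2

theorem natCast_sumSq (q : κ → ℤ) : (sumSq q : ℤ) = ∑ t, q t ^ 2 := by
  simp [sumSq]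

theorem natAbs_le_sumSq (q : κ → ℤ) (t : κ) : (q t).natAbs ≤ sumSq q :=
  (Nat.le_self_pow two_ne_zero _).trans
    (Finset.single_le_sum (f := fun t => (q t).natAbs ^ 2) (by simp) (Finset.mem_univ t))

theorem sumSq_surjective : Function.Surjective (sumSq : (Fin 4 → ℤ) → ℕ) := fun w => by
  obtain ⟨a, b, c, d, h⟩ := Nat.sum_four_squares w
  exact ⟨![a, b, c, d], by simpa [sumSq, Fin.sum_univ_four] using h⟩

theorem finite_setOf_forall_sumSq_le {ι : Type*} [Finite ι] (B : ℕ) :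
    {x : ι × κ → ℤ | ∀ k, sumSq (fun t => x (k, t)) ≤ B}.Finite := by
  refine (Set.Finite.pi (t := fun _ => Set.Icc (-(B : ℤ)) B) fun _ => Set.finite_Icc _ _).subset
    fun x hx ⟨k, t⟩ _ => ?_
  have := (natAbs_le_sumSq (fun t => x (k, t)) t).trans (hx k)
  exact ⟨by omega, by omega⟩

end SumSq

section Lift

variable {m : ℕ} (W : MvPolynomial (Fin (m + 2)) ℤ)

def fibre (x₁ x₂ : ℕ) : Set (Fin m → ℕ) :=
  {v | MvPolynomial.eval (Fin.cons (x₁ : ℤ) (Fin.cons (x₂ : ℤ) fun j => (v j : ℤ))) W = 0}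

def blockSumSq (x : Fin (m + 2) × Fin 4 → ℤ) (k : Fin (m + 2)) : ℕ :=
  sumSq fun t => x (k, t)

/-- Integer variables encoding, by four squares each, `x₂ = y + z` with `y, z ≥ 0` and the
naturals `v`. -/
def intLift (K : ℕ) : Set (Fin (m + 2) × Fin 4 → ℤ) :=
  {x | (fun j => blockSumSq x j.succ.succ) ∈ fibre W K (blockSumSq x 0 + blockSumSq x 1)}

variable {W}

theorem intLift_finite {K G : ℕ} (hfin : (fibre W K G).Finite)
    (hG : ∀ x₂, (fibre W K x₂).Nonempty → x₂ = G) : (intLift W K).Finite := by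
  obtain ⟨M, hM⟩ := hfin.bddAbove
  refine (finite_setOf_forall_sumSq_le (G + ∑ j, M j)).subset fun x hx => ?_
  have hx₂ := hG _ ⟨_, hx⟩
  have hv : (fun j => blockSumSq x j.succ.succ) ≤ M := hM (hx₂ ▸ hx)
  intro k
  change blockSumSq x k ≤ _
  refine Fin.cases (by omega) (fun k => Fin.cases ?_ (fun j => ?_) k) k
  · rw [Fin.succ_zero_eq_one]; omega
  · exact (hv j).trans ((Finset.single_le_sum (fun _ _ => Nat.zero_le _)
      (Finset.mem_univ j)).trans (Nat.le_add_left _ _))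

/-- Splitting `G = y + (G - y)` for each `y ≤ G` gives `G + 1` distinct points of the lift. -/
theorem le_ncard_intLift {K G : ℕ} {v : Fin m → ℕ} (hv : v ∈ fibre W K G)
    (hfin : (intLift W K).Finite) : G + 1 ≤ (intLift W K).ncard := by
  let r := Function.surjInv sumSq_surjective
  have hr : ∀ w, sumSq (r w) = w := Function.surjInv_eq sumSq_surjective
  have hsurj : Set.Iic G ⊆ (fun x => blockSumSq x 0) '' intLift W K := fun y hy => by
    let q : Fin (m + 2) → Fin 4 → ℤ := Fin.cons (r y) (Fin.cons (r (G - y)) fun j => r (v j))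
    refine ⟨fun i => q i.1 i.2, ?_, by simp [blockSumSq, q, hr]⟩
    have hG : y + (G - y) = G := Nat.add_sub_cancel' hy
    simpa [intLift, blockSumSq, q, hr, hG] using hv
  calc G + 1 = (Set.Iic G).ncard := (Set.ncard_Iic_nat G).symm
    _ ≤ ((fun x => blockSumSq x 0) '' intLift W K).ncard :=
      Set.ncard_le_ncard hsurj (hfin.image _)
    _ ≤ (intLift W K).ncard := Set.ncard_image_le hfin

end Lift

section Reduction

open MvPolynomial

variable {m : ℕ}

noncomputable def sumSqPoly (k : Fin (m + 2)) : MvPolynomial (Option (Fin (m + 2) × Fin 4)) ℤ :=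
  ∑ t, X (some (k, t)) ^ 2

/-- The arguments `(x₁, x₂, v)` of `W` on `intLift W K`, as polynomials in `x₁` (the variable
`none`) and the integer variables. -/
noncomputable def liftArgs : Fin (m + 2) → MvPolynomial (Option (Fin (m + 2) × Fin 4)) ℤ :=
  Fin.cons (X none) (Fin.cons (sumSqPoly 0 + sumSqPoly 1) fun j => sumSqPoly j.succ.succ)

theorem eval_sumSqPoly (K : ℤ) (x : Fin (m + 2) × Fin 4 → ℤ) (k : Fin (m + 2)) :
    eval (fun s => s.elim K x) (sumSqPoly k) = blockSumSq x k := by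
  simp [sumSqPoly, blockSumSq, natCast_sumSq]

theorem setOf_eval_bind₁_liftArgs_eq_zero (W : MvPolynomial (Fin (m + 2)) ℤ) (K : ℕ) :
    {x | eval (fun s => s.elim (K : ℤ) x) (bind₁ liftArgs W) = 0} = intLift W K := by
  ext x
  have hargs : (fun i => eval (fun s => s.elim (K : ℤ) x) (liftArgs i)) =
      Fin.cons (K : ℤ) (Fin.cons ((blockSumSq x 0 + blockSumSq x 1 : ℕ) : ℤ)
        fun j => (blockSumSq x j.succ.succ : ℤ)) := by
    funext i
    refine Fin.cases ?_ (fun i => Fin.cases ?_ (fun j => ?_) i) i <;>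
      simp [liftArgs, eval_sumSqPoly]
  change eval _ (bind₁ liftArgs W) = 0 ↔ eval _ W = 0
  rw [← hargs]
  exact Iff.of_eq (congrArg (· = 0) (eval₂Hom_bind₁ (RingHom.id ℤ) _ _ W))

/-- Lemma 1 applied to `intLift`: `2 ^ 2 ^ k` costs only `k + 2` variables. -/
theorem exists_ncard_intLift_le_f (W : MvPolynomial (Fin (m + 2)) ℤ) :
    ∃ c, ∀ k, (intLift W (2 ^ 2 ^ k)).Finite →
      (intLift W (2 ^ 2 ^ k)).ncard ≤ f (k + c) := by
  obtain ⟨c, hc⟩ := Presentable.exists_insert_eval (X := Fin (m + 2) × Fin 4 → ℤ)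
    (bind₁ liftArgs W)
  refine ⟨(m + 2) * 4 + 2 + c, fun k hfin => ?_⟩
  have hH := hc (fun s x => s.elim ((2 ^ 2 ^ k : ℕ) : ℤ) x)
    (Presentable.coordinates.insert_two_pow_two_pow k)
    (by rintro (_ | i); exacts [.inl (by simp), .inr ⟨i, rfl⟩])
  rw [← setOf_eval_bind₁_liftArgs_eq_zero] at hfin ⊢
  convert hH.ncard_le_f (.inl rfl) hfin using 2
  simp only [Fintype.card_prod, Fintype.card_fin]
  ring

end Reduction

theorem add_self_le_two_pow_two_pow (k : ℕ) : k + k ≤ 2 ^ 2 ^ k :=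
  calc k + k ≤ 2 ^ (k + 1) := by rw [pow_succ]; have := @Nat.lt_two_pow_self k; omega
    _ ≤ 2 ^ 2 ^ k := Nat.pow_le_pow_right two_pos Nat.lt_two_pow_self

theorem no_finite_fold_representation_of_majorant_general (g : ℕ → ℕ)
    (hgmono : ∀ m n, 0 < m → m ≤ n → g m ≤ g n)
    (hmaj : ∀ n, 0 < n → f n ≤ g n) :
    ¬ ∃ (m : ℕ) (W : MvPolynomial (Fin (m + 2)) ℤ),
      (∀ x1 x2 : ℕ, (0 < x1 ∧ g x1 = x2) ↔
        ∃ v : Fin m → ℕ,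
          MvPolynomial.eval
            (Fin.cons (x1 : ℤ) (Fin.cons (x2 : ℤ) (fun j => (v j : ℤ)))) W = 0) ∧
      (∀ x1 x2 : ℕ,
        {v : Fin m → ℕ |
          MvPolynomial.eval
            (Fin.cons (x1 : ℤ) (Fin.cons (x2 : ℤ) (fun j => (v j : ℤ)))) W = 0}.Finite) := by
  rintro ⟨m, W, hrep, hfin⟩
  obtain ⟨c, hc⟩ := exists_ncard_intLift_le_f W
  set K := 2 ^ 2 ^ (c + 1)
  obtain ⟨v, hv⟩ := (hrep K (g K)).1 ⟨by positivity, rfl⟩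
  have hlift : (intLift W K).Finite :=
    intLift_finite (hfin K (g K)) fun x₂ ⟨_, hx₂⟩ => ((hrep K x₂).2 ⟨_, hx₂⟩).2.symm
  have hN : c + 1 + c ≤ K := (Nat.add_le_add_left (Nat.le_succ c) _).trans
    (add_self_le_two_pow_two_pow _)
  refine Nat.not_succ_le_self (g K) ?_
  calc g K + 1 ≤ (intLift W K).ncard := le_ncard_intLift hv hlift
    _ ≤ f (c + 1 + c) := hc _ hlift
    _ ≤ g (c + 1 + c) := hmaj _ (by omega)
    _ ≤ g K := hgmono _ _ (by omega) hN

theorem no_finite_fold_representation_of_majorant (g : ℕ → ℕ)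
    (hgpos : ∀ n, 0 < n → 0 < g n)
    (hgmono : ∀ m n, 0 < m → m ≤ n → g m ≤ g n)
    (hmaj : ∀ n, 0 < n → f n ≤ g n) :
    ¬ ∃ (m : ℕ) (W : MvPolynomial (Fin (m + 2)) ℤ),
      (∀ x1 x2 : ℕ, (0 < x1 ∧ g x1 = x2) ↔
        ∃ v : Fin m → ℕ,
          MvPolynomial.eval
            (Fin.cons (x1 : ℤ) (Fin.cons (x2 : ℤ) (fun j => (v j : ℤ)))) W = 0) ∧
      (∀ x1 x2 : ℕ,
        {v : Fin m → ℕ |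
          MvPolynomial.eval
            (Fin.cons (x1 : ℤ) (Fin.cons (x2 : ℤ) (fun j => (v j : ℤ)))) W = 0}.Finite) :=
  no_finite_fold_representation_of_majorant_general g hgmono hmaj
end
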